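/- arXiv:1804.09341 — 4 statements merged into one kernel-verified Lean document; each statement's English description precedes it below -/
import Mathlib

section
/- Let A be an MDP and H a convex set of probability distributions. Suppose x, y ∈ H and there exist one-step MDP strategies τ_x, τ_y with x·M_{τ_x} ∈ H and y·M_{τ_y} ∈ H. Then for every λ ∈ [0,1] and z = λx + (1-λ)y there exists a one-step MDP strategy τ_z with z·M_{τ_z} ∈ H. -/
open scoped BigOperators

/-- An `n × n` real matrix is row-stochastic if all entries are nonnegative
and each row sums to `1`. -/
def RowStochastic {n : ℕ} (M : Matrix (Fin n) (Fin n) ℝ) : Prop :=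
  (∀ i j, 0 ≤ M i j) ∧ ∀ i, ∑ j, M i j = 1

/-- A probability distribution on `n` states. -/
def IsDist {n : ℕ} (Δ : Fin n → ℝ) : Prop :=
  (∀ i, 0 ≤ Δ i) ∧ ∑ i, Δ i = 1

/-- A one-step MDP strategy: each state gets a probability distribution over actions. -/
def IsMDPStrategy {n : ℕ} {A : Type} [Fintype A] (τ : A → Fin n → ℝ) : Prop :=
  (∀ α i, 0 ≤ τ α i) ∧ ∀ i, ∑ α, τ α i = 1

/-- The stochastic matrix induced by a one-step MDP strategy. -/
noncomputable def stratMatrix {n : ℕ} {A : Type} [Fintype A]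
    (M : A → Matrix (Fin n) (Fin n) ℝ) (τ : A → Fin n → ℝ) :
    Matrix (Fin n) (Fin n) ℝ :=
  fun i j => ∑ α, τ α i * M α i j

/-- The distribution reached after `m` steps applying the sequence of one-step
strategies `σ` from `Δ`. -/
noncomputable def iterDist {n : ℕ} {A : Type} [Fintype A]
    (M : A → Matrix (Fin n) (Fin n) ℝ) (σ : ℕ → A → Fin n → ℝ)
    (Δ : Fin n → ℝ) : ℕ → Fin n → ℝ
  | 0 => Δ
  | m + 1 => Matrix.vecMul (iterDist M σ Δ m) (stratMatrix M (σ m))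

/-- `Δ` admits an `H`-safe strategy. -/
def HSafe {n : ℕ} {A : Type} [Fintype A]
    (M : A → Matrix (Fin n) (Fin n) ℝ) (H : Set (Fin n → ℝ)) (Δ : Fin n → ℝ) : Prop :=
  ∃ σ : ℕ → A → Fin n → ℝ,
    (∀ m, IsMDPStrategy (σ m)) ∧ ∀ m, iterDist M σ Δ m ∈ H

/-- The winning region: distributions of `H` admitting an `H`-safe strategy. -/
def Hwin {n : ℕ} {A : Type} [Fintype A]
    (M : A → Matrix (Fin n) (Fin n) ℝ) (H : Set (Fin n → ℝ)) : Set (Fin n → ℝ) :=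
  {Δ | Δ ∈ H ∧ HSafe M H Δ}

/-- A convex polytope in H-representation: a finite intersection of half-spaces. -/
def IsPolytope {n : ℕ} (H : Set (Fin n → ℝ)) : Prop :=
  ∃ (k : ℕ) (a : Fin k → Fin n → ℝ) (b : Fin k → ℝ),
    H = {x | ∀ j, ∑ i, a j i * x i ≤ b j}

/-- A one-step PFA strategy: a probability distribution over actions. -/
def IsPFAStrategy {A : Type} [Fintype A] (τ : A → ℝ) : Prop :=
  (∀ α, 0 ≤ τ α) ∧ ∑ α, τ α = 1

/-- The stochastic matrix induced by a one-step PFA strategy. -/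
noncomputable def pfaMatrix {n : ℕ} {A : Type} [Fintype A]
    (M : A → Matrix (Fin n) (Fin n) ℝ) (τ : A → ℝ) : Matrix (Fin n) (Fin n) ℝ :=
  ∑ α, τ α • M α

/-!
Write `z = a + b` with `a = λ x` and `b = (1 - λ) y`. At each state `i` with `z i ≠ 0` play the
mixture `(a i τx + b i τy) / z i`, so that `z i τz = a i τx + b i τy` at every state (both sides
vanish when `z i = 0`, since `a, b ≥ 0`). The successor distribution `z M_τ` depends linearly on
the state-weighted strategy `z i τ α i`, hence `z M_{τz} = λ (x M_{τx}) + (1 - λ) (y M_{τy})`,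
which lies in `H` by convexity.
-/

variable {n : ℕ} {A : Type}

noncomputable def mixStrategy (a b : Fin n → ℝ) (τ σ : A → Fin n → ℝ) : A → Fin n → ℝ :=
  fun α i => if a i + b i = 0 then τ α i else (a i * τ α i + b i * σ α i) / (a i + b i)

section Mix

variable {a b : Fin n → ℝ} {τ σ : A → Fin n → ℝ}

theorem add_mul_mixStrategy (ha : ∀ i, 0 ≤ a i) (hb : ∀ i, 0 ≤ b i) (α : A) (i : Fin n) :
    (a i + b i) * mixStrategy a b τ σ α i = a i * τ α i + b i * σ α i := by
  by_cases h : a i + b i = 0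
  · have hai : a i = 0 := by linarith [ha i, hb i]
    have hbi : b i = 0 := by linarith [ha i, hb i]
    simp [hai, hbi]
  · simp only [mixStrategy, if_neg h]
    field_simp

theorem isMDPStrategy_mixStrategy [Fintype A] (ha : ∀ i, 0 ≤ a i) (hb : ∀ i, 0 ≤ b i)
    (hτ : IsMDPStrategy τ) (hσ : IsMDPStrategy σ) : IsMDPStrategy (mixStrategy a b τ σ) := by
  refine ⟨fun α i => ?_, fun i => ?_⟩
  · unfold mixStrategy
    split_ifs
    · exact hτ.1 α i
    · exact div_nonneg (add_nonneg (mul_nonneg (ha i) (hτ.1 α i)) (mul_nonneg (hb i) (hσ.1 α i)))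
        (add_nonneg (ha i) (hb i))
  · by_cases h : a i + b i = 0
    · simpa only [mixStrategy, if_pos h] using hτ.2 i
    · have hsum : (a i + b i) * ∑ α, mixStrategy a b τ σ α i = a i + b i := by
        rw [Finset.mul_sum]
        simp only [add_mul_mixStrategy ha hb, Finset.sum_add_distrib, ← Finset.mul_sum, hτ.2 i,
          hσ.2 i, mul_one]
      exact (mul_eq_left₀ h).mp hsum

end Mix

theorem vecMul_stratMatrix_eq_add [Fintype A] (M : A → Matrix (Fin n) (Fin n) ℝ)
    {d a b : Fin n → ℝ} {τ τa τb : A → Fin n → ℝ}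
    (h : ∀ α i, d i * τ α i = a i * τa α i + b i * τb α i) :
    Matrix.vecMul d (stratMatrix M τ) =
      Matrix.vecMul a (stratMatrix M τa) + Matrix.vecMul b (stratMatrix M τb) := by
  funext j
  simp only [Matrix.vecMul, dotProduct, stratMatrix, Pi.add_apply, Finset.mul_sum,
    ← Finset.sum_add_distrib]
  refine Finset.sum_congr rfl fun i _ => Finset.sum_congr rfl fun α _ => ?_
  rw [← mul_assoc, h, add_mul, mul_assoc, mul_assoc]

theorem stmt5_general {n : ℕ} {A : Type} [Fintype A]
    (M : A → Matrix (Fin n) (Fin n) ℝ)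
    (H : Set (Fin n → ℝ)) (hconv : Convex ℝ H) (hHd : ∀ Δ ∈ H, IsDist Δ)
    (x y : Fin n → ℝ) (hx : x ∈ H) (hy : y ∈ H)
    (τx τy : A → Fin n → ℝ) (hτx : IsMDPStrategy τx) (hτy : IsMDPStrategy τy)
    (hxstep : Matrix.vecMul x (stratMatrix M τx) ∈ H)
    (hystep : Matrix.vecMul y (stratMatrix M τy) ∈ H)
    (l : ℝ) (hl : l ∈ Set.Icc (0:ℝ) 1) :
    ∃ τz : A → Fin n → ℝ, IsMDPStrategy τz ∧
      Matrix.vecMul (l • x + (1 - l) • y) (stratMatrix M τz) ∈ H := by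
  obtain ⟨hl0, hl1⟩ := hl
  have ha : ∀ i, 0 ≤ (l • x) i := fun i => mul_nonneg hl0 ((hHd x hx).1 i)
  have hb : ∀ i, 0 ≤ ((1 - l) • y) i := fun i => mul_nonneg (sub_nonneg.mpr hl1) ((hHd y hy).1 i)
  refine ⟨mixStrategy (l • x) ((1 - l) • y) τx τy, isMDPStrategy_mixStrategy ha hb hτx hτy, ?_⟩
  rw [vecMul_stratMatrix_eq_add M (d := l • x + (1 - l) • y) (add_mul_mixStrategy ha hb),
    Matrix.smul_vecMul, Matrix.smul_vecMul]
  exact hconv hxstep hystep hl0 (sub_nonneg.mpr hl1) (add_sub_cancel l 1)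

theorem stmt5 {n : ℕ} {A : Type} [Fintype A]
    (M : A → Matrix (Fin n) (Fin n) ℝ) (hM : ∀ α, RowStochastic (M α))
    (H : Set (Fin n → ℝ)) (hconv : Convex ℝ H) (hHd : ∀ Δ ∈ H, IsDist Δ)
    (x y : Fin n → ℝ) (hx : x ∈ H) (hy : y ∈ H)
    (τx τy : A → Fin n → ℝ) (hτx : IsMDPStrategy τx) (hτy : IsMDPStrategy τy)
    (hxstep : Matrix.vecMul x (stratMatrix M τx) ∈ H)
    (hystep : Matrix.vecMul y (stratMatrix M τy) ∈ H)
    (l : ℝ) (hl : l ∈ Set.Icc (0:ℝ) 1) :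
    ∃ τz : A → Fin n → ℝ, IsMDPStrategy τz ∧
      Matrix.vecMul (l • x + (1 - l) • y) (stratMatrix M τz) ∈ H :=
  stmt5_general M H hconv hHd x y hx hy τx τy hτx hτy hxstep hystep l hl
end

section
/- For an MDP A and a closed set of distributions H contained in the probability simplex, H_win is a compact subset of ℝ^n. -/
open scoped BigOperators

/-! `Hwin M H` is the projection to the first factor of the set of pairs `(Δ, σ)` where `σ` is a
sequence of strategies keeping every iterate in `H`. Each iterate depends continuously on
`(Δ, σ)`, so that set is closed in the product of the compact set `H` with the space of strategy
sequences, which is compact by Tychonoff; hence its projection is compact. -/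

theorem isCompact_of_forall_isDist {n : ℕ} {H : Set (Fin n → ℝ)} (hclosed : IsClosed H)
    (hHd : ∀ Δ ∈ H, IsDist Δ) : IsCompact H :=
  (isCompact_stdSimplex ℝ (Fin n)).of_isClosed_subset hclosed hHd

theorem isCompact_setOf_isMDPStrategy (n : ℕ) (A : Type) [Fintype A] :
    IsCompact {τ : A → Fin n → ℝ | IsMDPStrategy τ} := by
  have hswap : {τ : A → Fin n → ℝ | IsMDPStrategy τ} =
      Function.swap '' Set.univ.pi fun _ : Fin n => stdSimplex ℝ A := by
    ext τ
    refine ⟨fun hτ => ⟨Function.swap τ, fun i _ => ⟨fun α => hτ.1 α i, hτ.2 i⟩, rfl⟩, ?_⟩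
    rintro ⟨τ', hτ', rfl⟩
    exact ⟨fun α i => (hτ' i trivial).1 α, fun i => (hτ' i trivial).2⟩
  rw [hswap]
  exact (isCompact_univ_pi fun _ => isCompact_stdSimplex ℝ A).image (by fun_prop)

theorem continuous_iterDist {n : ℕ} {A : Type} [Fintype A]
    (M : A → Matrix (Fin n) (Fin n) ℝ) (m : ℕ) :
    Continuous fun p : (Fin n → ℝ) × (ℕ → A → Fin n → ℝ) => iterDist M p.2 p.1 m := by
  induction m with
  | zero => exact continuous_fst
  | succ m ih =>
    have hstrat : Continuous fun p : (Fin n → ℝ) × (ℕ → A → Fin n → ℝ) =>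
        stratMatrix M (p.2 m) := by
      unfold stratMatrix; fun_prop
    exact ih.matrix_vecMul hstrat

theorem Hwin_eq_image_fst {n : ℕ} {A : Type} [Fintype A]
    (M : A → Matrix (Fin n) (Fin n) ℝ) (H : Set (Fin n → ℝ)) :
    Hwin M H = Prod.fst '' ((H ×ˢ {σ | ∀ m, IsMDPStrategy (σ m)}) ∩
      ⋂ m, (fun p : (Fin n → ℝ) × (ℕ → A → Fin n → ℝ) => iterDist M p.2 p.1 m) ⁻¹' H) := by
  ext Δ
  constructor
  · rintro ⟨hΔ, σ, hσ, hsafe⟩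
    exact ⟨(Δ, σ), ⟨⟨hΔ, hσ⟩, Set.mem_iInter.2 hsafe⟩, rfl⟩
  · rintro ⟨⟨Δ, σ⟩, ⟨⟨hΔ, hσ⟩, hsafe⟩, rfl⟩
    exact ⟨hΔ, σ, hσ, Set.mem_iInter.1 hsafe⟩

theorem stmt8_general {n : ℕ} {A : Type} [Fintype A]
    (M : A → Matrix (Fin n) (Fin n) ℝ)
    (H : Set (Fin n → ℝ)) (hclosed : IsClosed H)
    (hHd : ∀ Δ ∈ H, IsDist Δ) :
    IsCompact (Hwin M H) := by
  have hstrategies : IsCompact {σ : ℕ → A → Fin n → ℝ | ∀ m, IsMDPStrategy (σ m)} := by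
    simpa only [Set.pi, Set.mem_univ, true_imp_iff, Set.mem_ofPred_eq] using
      isCompact_univ_pi fun _ : ℕ => isCompact_setOf_isMDPStrategy n A
  have hsafe : IsClosed (⋂ m, (fun p : (Fin n → ℝ) × (ℕ → A → Fin n → ℝ) =>
      iterDist M p.2 p.1 m) ⁻¹' H) :=
    isClosed_iInter fun m => hclosed.preimage (continuous_iterDist M m)
  rw [Hwin_eq_image_fst]
  exact (((isCompact_of_forall_isDist hclosed hHd).prod hstrategies).inter_right hsafe).image
    continuous_fst

theorem stmt8 {n : ℕ} {A : Type} [Fintype A]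
    (M : A → Matrix (Fin n) (Fin n) ℝ) (hM : ∀ α, RowStochastic (M α))
    (H : Set (Fin n → ℝ)) (hclosed : IsClosed H)
    (hHd : ∀ Δ ∈ H, IsDist Δ) :
    IsCompact (Hwin M H) :=
  stmt8_general M H hclosed hHd
end

section
/- Let A be an MDP with states s_1,…,s_n, actions α_1,…,α_k, t_i^j = e_i·M_{α_j}, and H a convex set of distributions. Then H = H_win if and only if: for all λ_1,…,λ_n ∈ [0,1], there exist μ_i^j ∈ [0,1] such that, if ∑_i λ_i e_i ∈ H, then ∑_j μ_i^j = λ_i for all i and ∑_{i,j} μ_i^j t_i^j ∈ H. -/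
open scoped BigOperators

/-!
By induction on time, `H = H_win` holds exactly when every `Δ ∈ H` has a one-step strategy `τ`
with `Δ · M_τ ∈ H`. Writing `μ_i^α = Δ_i τ(α, s_i)` turns a one-step strategy into a family of
weights with marginals `Δ_i` and `Δ · M_τ = ∑_{i,α} μ_i^α t_i^α`; conversely such weights are
normalised back into a strategy, the states with `Δ_i = 0` getting the uniform distribution.
-/

open Finset

section

variable {n : ℕ} {A : Type} [Fintype A]

lemma IsDist.mem_Icc {Δ : Fin n → ℝ} (hΔ : IsDist Δ) (i : Fin n) : Δ i ∈ Set.Icc (0 : ℝ) 1 :=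
  ⟨hΔ.1 i, hΔ.2 ▸ single_le_sum (fun j _ => hΔ.1 j) (mem_univ i)⟩

lemma IsMDPStrategy.le_one {τ : A → Fin n → ℝ} (hτ : IsMDPStrategy τ) (α : A) (i : Fin n) :
    τ α i ≤ 1 :=
  hτ.2 i ▸ single_le_sum (f := fun β => τ β i) (fun β _ => hτ.1 β i) (mem_univ α)

lemma vecMul_stratMatrix (M : A → Matrix (Fin n) (Fin n) ℝ) (τ : A → Fin n → ℝ)
    (Δ : Fin n → ℝ) :
    Matrix.vecMul Δ (stratMatrix M τ) = ∑ i, ∑ α, (Δ i * τ α i) • M α i := by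
  ext j
  simp only [Matrix.vecMul, dotProduct, stratMatrix, Finset.sum_apply, Pi.smul_apply,
    smul_eq_mul, mul_sum, mul_assoc]

section Safety

variable {M : A → Matrix (Fin n) (Fin n) ℝ} {H : Set (Fin n → ℝ)}

lemma hSafe_of_forall_step
    (hstep : ∀ Δ ∈ H, ∃ τ, IsMDPStrategy τ ∧ Matrix.vecMul Δ (stratMatrix M τ) ∈ H)
    {Δ : Fin n → ℝ} (hΔ : Δ ∈ H) : HSafe M H Δ := by
  choose τ hτ hnext using hstep
  let play : ℕ → H := fun m =>
    Nat.rec ⟨Δ, hΔ⟩ (fun _ p => ⟨Matrix.vecMul p.1 (stratMatrix M (τ p.1 p.2)), hnext p.1 p.2⟩) m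
  let σ : ℕ → A → Fin n → ℝ := fun m => τ (play m).1 (play m).2
  have hplay : ∀ m, iterDist M σ Δ m = (play m).1 := by
    intro m
    induction m with
    | zero => rfl
    | succ m ih => simp only [iterDist, ih]; rfl
  exact ⟨σ, fun m => hτ _ _, fun m => hplay m ▸ (play m).2⟩

lemma HSafe.exists_step {Δ : Fin n → ℝ} (h : HSafe M H Δ) :
    ∃ τ, IsMDPStrategy τ ∧ Matrix.vecMul Δ (stratMatrix M τ) ∈ H := by
  obtain ⟨σ, hσ, hsafe⟩ := h
  exact ⟨σ 0, hσ 0, hsafe 1⟩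

lemma eq_Hwin_iff_forall_step :
    H = Hwin M H ↔ ∀ Δ ∈ H, ∃ τ, IsMDPStrategy τ ∧ Matrix.vecMul Δ (stratMatrix M τ) ∈ H := by
  constructor
  · intro hH Δ hΔ
    exact (hH ▸ hΔ : Δ ∈ Hwin M H).2.exists_step
  · intro hstep
    exact Set.Subset.antisymm (fun Δ hΔ => ⟨hΔ, hSafe_of_forall_step hstep hΔ⟩) fun _ hΔ => hΔ.1

end Safety

lemma exists_isMDPStrategy_mul_eq [Nonempty A] {Δ : Fin n → ℝ} {μ : A → Fin n → ℝ}
    (hμ : ∀ α i, 0 ≤ μ α i) (hsum : ∀ i, ∑ α, μ α i = Δ i) :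
    ∃ τ, IsMDPStrategy τ ∧ ∀ α i, Δ i * τ α i = μ α i := by
  have hcard : (Fintype.card A : ℝ) ≠ 0 := Nat.cast_ne_zero.mpr Fintype.card_ne_zero
  refine ⟨fun α i => if Δ i = 0 then (Fintype.card A : ℝ)⁻¹ else μ α i / Δ i, ⟨?_, ?_⟩, ?_⟩
  · intro α i
    dsimp only
    split_ifs with hi
    · positivity
    · exact div_nonneg (hμ α i) (hsum i ▸ sum_nonneg fun β _ => hμ β i)
  · intro i
    by_cases hi : Δ i = 0
    · simp [hi, hcard]
    · simp only [hi, if_false]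
      rw [← sum_div, hsum i, div_self hi]
  · intro α i
    dsimp only
    split_ifs with hi
    · rw [hi, zero_mul, eq_comm]
      exact (sum_eq_zero_iff_of_nonneg fun β _ => hμ β i).mp (hi ▸ hsum i) α (mem_univ α)
    · field_simp

end

theorem stmt15_general {n : ℕ} {A : Type} [Fintype A]
    (M : A → Matrix (Fin n) (Fin n) ℝ)
    (H : Set (Fin n → ℝ)) (hHd : ∀ Δ ∈ H, IsDist Δ) :
    H = Hwin M H ↔
      ∀ l : Fin n → ℝ, (∀ i, l i ∈ Set.Icc (0:ℝ) 1) →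
        ∃ μ : A → Fin n → ℝ, (∀ j i, μ j i ∈ Set.Icc (0:ℝ) 1) ∧
          ((∑ i, l i • (Pi.single i 1 : Fin n → ℝ)) ∈ H →
            (∀ i, ∑ j, μ j i = l i) ∧ (∑ i, ∑ j, μ j i • (M j i)) ∈ H) := by
  simp only [← pi_eq_sum_univ', eq_Hwin_iff_forall_step]
  constructor
  · intro hstep l hl
    by_cases hlH : l ∈ H
    · obtain ⟨τ, hτ, hnext⟩ := hstep l hlH
      refine ⟨fun α i => l i * τ α i, fun α i => ?_, fun _ => ⟨fun i => ?_, ?_⟩⟩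
      · exact ⟨mul_nonneg (hl i).1 (hτ.1 α i), mul_le_one₀ (hl i).2 (hτ.1 α i) (hτ.le_one α i)⟩
      · rw [← mul_sum, hτ.2 i, mul_one]
      · rwa [vecMul_stratMatrix] at hnext
    · exact ⟨0, fun _ _ => ⟨le_rfl, zero_le_one⟩, fun h => absurd h hlH⟩
  · intro h Δ hΔ
    have hdist := hHd Δ hΔ
    obtain ⟨μ, hμ, hμH⟩ := h Δ hdist.mem_Icc
    obtain ⟨hsum, hnext⟩ := hμH hΔ
    have : Nonempty A := by
      by_contra hA
      rw [not_nonempty_iff] at hA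
      simpa [← hsum] using hdist.2
    obtain ⟨τ, hτ, hτμ⟩ := exists_isMDPStrategy_mul_eq (fun α i => (hμ α i).1) hsum
    exact ⟨τ, hτ, by simpa only [vecMul_stratMatrix, hτμ]⟩

theorem stmt15 {n : ℕ} {A : Type} [Fintype A]
    (M : A → Matrix (Fin n) (Fin n) ℝ) (hM : ∀ α, RowStochastic (M α))
    (H : Set (Fin n → ℝ)) (hconv : Convex ℝ H) (hHd : ∀ Δ ∈ H, IsDist Δ) :
    H = Hwin M H ↔
      ∀ l : Fin n → ℝ, (∀ i, l i ∈ Set.Icc (0:ℝ) 1) →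
        ∃ μ : A → Fin n → ℝ, (∀ j i, μ j i ∈ Set.Icc (0:ℝ) 1) ∧
          ((∑ i, l i • (Pi.single i 1 : Fin n → ℝ)) ∈ H →
            (∀ i, ∑ j, μ j i = l i) ∧ (∑ i, ∑ j, μ j i • (M j i)) ∈ H) :=
  stmt15_general M H hHd
end

section
/- There exists a PFA A with 4 states, 2 actions, and a closed convex polytope H (the segment from e_3 to e_4), together with x, y ∈ H and one-step PFA strategies τ_x, τ_y with x·M_{τ_x} ∈ H and y·M_{τ_y} ∈ H, such that for some z on the segment [x,y] no one-step PFA strategy τ satisfies z·M_τ ∈ H. -/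
open scoped BigOperators

/-!
From `z = (e₃ + e₄)/2` action `α` leaks the half of `z` sitting on `s₄` to `s₁`, and action `β`
leaks the half sitting on `s₃` to `s₂`. Since `Δ ↦ Δ s₁ + Δ s₂` is linear, every mixture of `α`
and `β` also moves mass `1/2` onto `{s₁, s₂}`, whereas every point of the segment `[e₃, e₄]` has
none there. The endpoints themselves stay put: `e₃` under `α`, `e₄` under `β`.
-/

open Matrix

theorem isCompact_segment {E : Type*} [AddCommGroup E] [Module ℝ E] [TopologicalSpace E]
    [IsTopologicalAddGroup E] [ContinuousSMul ℝ E] (x y : E) : IsCompact (segment ℝ x y) := by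
  rw [segment_eq_image]
  exact isCompact_Icc.image (by fun_prop)

theorem dotProduct_eq_zero_of_mem_segment {n : ℕ} {w x y p : Fin n → ℝ}
    (hx : x ⬝ᵥ w = 0) (hy : y ⬝ᵥ w = 0) (hp : p ∈ segment ℝ x y) : p ⬝ᵥ w = 0 := by
  obtain ⟨a, b, -, -, -, rfl⟩ := hp
  simp [add_dotProduct, smul_dotProduct, hx, hy]

section PFA

variable {n : ℕ} {A : Type} [Fintype A]

theorem isPFAStrategy_single [DecidableEq A] (a : A) : IsPFAStrategy (Pi.single a (1 : ℝ)) :=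
  ⟨fun b => (Pi.single_nonneg.2 zero_le_one :
    0 ≤ (Pi.single a 1 : A → ℝ)) b, by simp⟩

theorem pfaMatrix_single [DecidableEq A] (M : A → Matrix (Fin n) (Fin n) ℝ) (a : A) :
    pfaMatrix M (Pi.single a 1) = M a := by
  simp [pfaMatrix, Pi.single_apply]

theorem vecMul_pfaMatrix (M : A → Matrix (Fin n) (Fin n) ℝ) (τ : A → ℝ) (v : Fin n → ℝ) :
    v ᵥ* pfaMatrix M τ = ∑ α, τ α • v ᵥ* M α := by
  simp only [pfaMatrix, vecMul_sum, vecMul_smul]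

theorem IsPFAStrategy.vecMul_pfaMatrix_dotProduct {M : A → Matrix (Fin n) (Fin n) ℝ}
    {τ : A → ℝ} (hτ : IsPFAStrategy τ) {v w : Fin n → ℝ} {c : ℝ}
    (h : ∀ α, v ᵥ* M α ⬝ᵥ w = c) : v ᵥ* pfaMatrix M τ ⬝ᵥ w = c := by
  simp only [vecMul_pfaMatrix, sum_dotProduct, smul_dotProduct, h, smul_eq_mul,
    ← Finset.sum_mul, hτ.2, one_mul]

end PFA

/-- States `s₁, …, s₄` are `0, …, 3`; action `α` is `0` and `β` is `1`. -/
def leakyActions : Fin 2 → Matrix (Fin 4) (Fin 4) ℝ :=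
  ![!![1, 0, 0, 0; 0, 1, 0, 0; 0, 0, 1, 0; 1, 0, 0, 0],
    !![1, 0, 0, 0; 0, 1, 0, 0; 0, 1, 0, 0; 0, 0, 0, 1]]

theorem rowStochastic_leakyActions (α : Fin 2) : RowStochastic (leakyActions α) := by
  refine ⟨fun i j => ?_, fun i => ?_⟩ <;> fin_cases α <;> fin_cases i <;>
    try fin_cases j
  all_goals simp [leakyActions, Fin.sum_univ_four]

theorem single_two_vecMul_leakyActions_zero :
    (Pi.single 2 1 : Fin 4 → ℝ) ᵥ* leakyActions 0 = Pi.single 2 1 := by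
  ext j; fin_cases j <;> simp [leakyActions, vecMul, dotProduct, Fin.sum_univ_four]

theorem single_three_vecMul_leakyActions_one :
    (Pi.single 3 1 : Fin 4 → ℝ) ᵥ* leakyActions 1 = Pi.single 3 1 := by
  ext j; fin_cases j <;> simp [leakyActions, vecMul, dotProduct, Fin.sum_univ_four]

theorem midpoint_single_two_single_three :
    midpoint ℝ (Pi.single 2 1 : Fin 4 → ℝ) (Pi.single 3 1) = ![0, 0, 1 / 2, 1 / 2] := by
  ext j; fin_cases j <;> norm_num [midpoint_eq_smul_add, Pi.single_apply, Fin.ext_iff]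

theorem midpoint_vecMul_leakyActions_mass (α : Fin 2) :
    midpoint ℝ (Pi.single 2 1 : Fin 4 → ℝ) (Pi.single 3 1) ᵥ* leakyActions α ⬝ᵥ ![1, 1, 0, 0]
      = 1 / 2 := by
  rw [midpoint_single_two_single_three]
  fin_cases α <;> simp [leakyActions, vecMul, dotProduct, Fin.sum_univ_four]

theorem stmt18 :
    ∃ (M : Fin 2 → Matrix (Fin 4) (Fin 4) ℝ) (H : Set (Fin 4 → ℝ))
      (x y z : Fin 4 → ℝ) (τx τy : Fin 2 → ℝ),
      (∀ α, RowStochastic (M α)) ∧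
      H = segment ℝ ((Pi.single 2 1 : Fin 4 → ℝ)) ((Pi.single 3 1 : Fin 4 → ℝ)) ∧
      IsClosed H ∧ Convex ℝ H ∧
      x ∈ H ∧ y ∈ H ∧
      IsPFAStrategy τx ∧ IsPFAStrategy τy ∧
      Matrix.vecMul x (pfaMatrix M τx) ∈ H ∧
      Matrix.vecMul y (pfaMatrix M τy) ∈ H ∧
      z ∈ segment ℝ x y ∧
      ∀ τ : Fin 2 → ℝ, IsPFAStrategy τ → Matrix.vecMul z (pfaMatrix M τ) ∉ H := by
  set e₃ : Fin 4 → ℝ := Pi.single 2 1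
  set e₄ : Fin 4 → ℝ := Pi.single 3 1
  refine ⟨leakyActions, segment ℝ e₃ e₄, e₃, e₄, midpoint ℝ e₃ e₄, Pi.single 0 1, Pi.single 1 1,
    rowStochastic_leakyActions, rfl, (isCompact_segment e₃ e₄).isClosed, convex_segment e₃ e₄,
    left_mem_segment ℝ e₃ e₄, right_mem_segment ℝ e₃ e₄, isPFAStrategy_single 0,
    isPFAStrategy_single 1, ?_, ?_, midpoint_mem_segment e₃ e₄, fun τ hτ hmem => ?_⟩
  · rw [pfaMatrix_single, single_two_vecMul_leakyActions_zero]
    exact left_mem_segment ℝ e₃ e₄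
  · rw [pfaMatrix_single, single_three_vecMul_leakyActions_one]
    exact right_mem_segment ℝ e₃ e₄
  · have hleak := hτ.vecMul_pfaMatrix_dotProduct midpoint_vecMul_leakyActions_mass
    have hH := dotProduct_eq_zero_of_mem_segment (w := ![1, 1, 0, 0])
      (by simp [e₃, dotProduct, Fin.sum_univ_four]) (by simp [e₄, dotProduct, Fin.sum_univ_four])
      hmem
    exact absurd (hH.symm.trans hleak) (by norm_num)
end
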